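/- Let G be a finite simple graph with at least one edge. Then lim_{n→∞} emb(n,G)/n = 1/χ_f(G), where χ_f(G) = inf{ a/b : a, b positive integers such that there exists a graph homomorphism from G to the Kneser graph Kn(a,b) }. -/

import Mathlib

open Finset

/-- The Kneser cube: the simple graph on all subsets of `[n]`, with two distinct
sets adjacent iff they are disjoint. -/
def kneserCube (n : ℕ) : SimpleGraph (Finset (Fin n)) where
  Adj A B := A ≠ B ∧ Disjoint A B
  symm := ⟨fun _ _ h => ⟨h.1.symm, h.2.symm⟩⟩
  loopless := ⟨fun _ h => h.1 rfl⟩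

/-- The Kneser graph `Kn(n, m)`: the simple graph on all `m`-element subsets of `[n]`,
with two distinct sets adjacent iff they are disjoint. -/
def kneserGraph (n m : ℕ) : SimpleGraph {A : Finset (Fin n) // A.card = m} where
  Adj A B := A ≠ B ∧ Disjoint A.1 B.1
  symm := ⟨fun _ _ h => ⟨h.1.symm, h.2.symm⟩⟩
  loopless := ⟨fun _ h => h.1 rfl⟩

/-- `H` contains a subgraph isomorphic to `G`, i.e. there is an injective graph
homomorphism from `G` into `H`. -/
def hasCopy {V W : Type*} (G : SimpleGraph V) (H : SimpleGraph W) : Prop :=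
  ∃ f : V → W, Function.Injective f ∧ ∀ a b, G.Adj a b → H.Adj (f a) (f b)

/-- A family `F` of subsets of `[n]` is `G`-free if the subgraph of the Kneser cube
induced on `F` contains no subgraph isomorphic to `G`. -/
def gFree {V : Type*} (G : SimpleGraph V) (n : ℕ) (F : Finset (Finset (Fin n))) : Prop :=
  ¬ ∃ f : V → Finset (Fin n),
      Function.Injective f ∧ (∀ v, f v ∈ F) ∧
        ∀ a b, G.Adj a b → (kneserCube n).Adj (f a) (f b)

/-- `vexG n G` : the maximum size of a `G`-free family of subsets of `[n]`. -/
noncomputable def vexG {V : Type*} (n : ℕ) (G : SimpleGraph V) : ℕ :=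
  sSup {k | ∃ F : Finset (Finset (Fin n)), gFree G n F ∧ F.card = k}

/-- `emb n G` : the maximum `m` such that the Kneser graph `Kn(n, m)` contains a
subgraph isomorphic to `G`. -/
noncomputable def emb {V : Type*} (n : ℕ) (G : SimpleGraph V) : ℕ :=
  sSup {m | hasCopy G (kneserGraph n m)}

/-! A copy of `G` in `Kn(n, m)` is a homomorphism, so `n / m ≥ χ_f(G)`: this is the upper bound.
Conversely, from a homomorphism `G → Kn(a, b)` with `a / b` close to `χ_f(G)`, replace each point
of `[a]` by a block of `s = t + |V|` points and send `v` to the union, over the points of its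
image, of a `t`-subset of the block chosen specifically for `v`. This is an injective
homomorphism `G → Kn(a s, b t)`, and `b t / (a s) → b / a` as `t → ∞`. -/

open Filter Topology

section

variable {V : Type*} (G : SimpleGraph V)

/-- The ratios `a / b` over all homomorphisms `G → Kn(a, b)`; `χ_f(G)` is their infimum. -/
def kneserRatios : Set ℝ :=
  {x : ℝ | ∃ a b : ℕ, 0 < a ∧ 0 < b ∧
    (∃ h : V → {A : Finset (Fin a) // A.card = b},
      ∀ u v, G.Adj u v → (kneserGraph a b).Adj (h u) (h v)) ∧
    x = (a : ℝ) / (b : ℝ)}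

variable {G}

lemma hasCopy.trans {W X : Type*} {H : SimpleGraph W} {K : SimpleGraph X}
    (hGH : hasCopy G H) (hHK : hasCopy H K) : hasCopy G K := by
  obtain ⟨f, hf, hfadj⟩ := hGH
  obtain ⟨g, hg, hgadj⟩ := hHK
  exact ⟨g ∘ f, hg.comp hf, fun u v huv => hgadj _ _ (hfadj u v huv)⟩

lemma hasCopy_kneserGraph_of_le {n n' : ℕ} (m : ℕ) (hn : n ≤ n') :
    hasCopy (kneserGraph n m) (kneserGraph n' m) := by
  refine ⟨fun A => ⟨A.1.map (Fin.castLEEmb hn), by rw [card_map, A.2]⟩, ?_, ?_⟩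
  · intro A B hAB
    exact Subtype.ext (map_injective _ (congrArg Subtype.val hAB))
  · rintro A B ⟨hne, hdisj⟩
    refine ⟨fun h => hne (Subtype.ext (map_injective _ (congrArg Subtype.val h))), ?_⟩
    exact (Finset.disjoint_map _).2 hdisj

lemma le_of_hasCopy_kneserGraph [Nonempty V] {n m : ℕ} (h : hasCopy G (kneserGraph n m)) :
    m ≤ n := by
  obtain ⟨f, -, -⟩ := h
  obtain ⟨v⟩ := ‹Nonempty V›
  simpa [(f v).2] using card_le_univ (f v).1

lemma bddAbove_hasCopy_kneserGraph [Nonempty V] (n : ℕ) :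
    BddAbove {m | hasCopy G (kneserGraph n m)} :=
  ⟨n, fun _ => le_of_hasCopy_kneserGraph⟩

lemma le_emb [Nonempty V] {n m : ℕ} (h : hasCopy G (kneserGraph n m)) : m ≤ emb n G :=
  le_csSup (bddAbove_hasCopy_kneserGraph n) h

lemma hasCopy_kneserGraph_emb [Nonempty V] {n : ℕ} (h : 0 < emb n G) :
    hasCopy G (kneserGraph n (emb n G)) := by
  refine Nat.sSup_mem ?_ (bddAbove_hasCopy_kneserGraph n)
  refine Set.nonempty_iff_ne_empty.2 fun hempty => ?_
  simp [emb, hempty] at h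

/-- Blowing up every point of `[a]` into `s` points turns a homomorphism `G → Kn(a, b)` into
an injective one `G → Kn(a s, b t)`, once distinct `t`-subsets of `[s]` tag the vertices. -/
lemma hasCopy_kneserGraph_mul {a b s t : ℕ} (hb : 0 < b)
    (φ : G →g kneserGraph a b)
    (tag : V ↪ {B : Finset (Fin s) // B.card = t}) :
    hasCopy G (kneserGraph (a * s) (b * t)) := by
  classical
  let f : V → {A : Finset (Fin (a * s)) // A.card = b * t} := fun v =>
    ⟨((φ v).1 ×ˢ (tag v).1).map finProdFinEquiv.toEmbedding,
      by rw [card_map, card_product, (φ v).2, (tag v).2]⟩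
  have hf : Function.Injective f := by
    intro u v huv
    have hprod : (φ u).1 ×ˢ (tag u).1 = (φ v).1 ×ˢ (tag v).1 :=
      map_injective _ (congrArg Subtype.val huv)
    have hne : ∀ w, (φ w).1.Nonempty := fun w => card_pos.1 (by rw [(φ w).2]; exact hb)
    have htag : (tag u).1 = (tag v).1 := by
      rw [← product_image_snd (t := (tag u).1) (hne u), hprod, product_image_snd (hne v)]
    exact tag.injective (Subtype.ext htag)
  refine ⟨f, hf, fun u v huv => ⟨fun h' => huv.ne (hf h'), ?_⟩⟩
  exact (Finset.disjoint_map _).2 (disjoint_product.2 (Or.inl (φ.map_adj huv).2))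

lemma nonempty_embedding_finset_card_eq [Fintype V] (t : ℕ) (ht : 0 < t) :
    Nonempty (V ↪ {B : Finset (Fin (t + Fintype.card V)) // B.card = t}) := by
  apply Function.Embedding.nonempty_of_card_le
  rw [Fintype.card_finset_len, Fintype.card_fin, Nat.choose_symm_add]
  calc Fintype.card V ≤ (Fintype.card V + 1).choose (Fintype.card V) := by
        rw [Nat.choose_succ_self_right]; omega
    _ ≤ _ := Nat.choose_le_choose _ (by omega)

lemma mul_le_emb [Fintype V] [Nonempty V] {a b t n : ℕ} (hb : 0 < b)
    (φ : G →g kneserGraph a b)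
    (ht : 0 < t) (hn : a * (t + Fintype.card V) ≤ n) : b * t ≤ emb n G := by
  obtain ⟨tag⟩ := nonempty_embedding_finset_card_eq (V := V) t ht
  exact le_emb ((hasCopy_kneserGraph_mul hb φ tag).trans
    (hasCopy_kneserGraph_of_le _ hn))

/-- Taking `t = ⌊n / a⌋ - |V|` in `mul_le_emb`. -/
lemma mul_le_mul_emb_add [Fintype V] [Nonempty V] {a b : ℕ} (ha : 0 < a) (hb : 0 < b)
    (φ : G →g kneserGraph a b) (n : ℕ) :
    b * n ≤ a * emb n G + a * b * (Fintype.card V + 1) := by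
  set k := Fintype.card V
  have hn : n < a * (n / a + 1) := Nat.lt_mul_div_succ n ha
  rcases Nat.lt_or_ge (n / a) (k + 1) with hq | hq
  · have : n ≤ a * (k + 1) := by nlinarith
    nlinarith
  · obtain ⟨t, ht⟩ := Nat.exists_eq_add_of_le hq
    have hemb : b * (t + 1) ≤ emb n G := by
      refine mul_le_emb hb φ t.succ_pos ?_
      calc a * (t + 1 + k) = a * (n / a) := by rw [ht]; ring
        _ ≤ n := Nat.mul_div_le n a
    rw [ht] at hn
    nlinarith

lemma eventually_lt_emb_div [Fintype V] [Nonempty V] {a b : ℕ} (ha : 0 < a) (hb : 0 < b)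
    (φ : G →g kneserGraph a b)
    {y : ℝ} (hy : y < b / a) : ∀ᶠ n : ℕ in atTop, y < emb n G / n := by
  set C : ℝ := b * (Fintype.card V + 1)
  have hlim : Tendsto (fun n : ℕ => (b / a : ℝ) - C / n) atTop (𝓝 (b / a)) := by
    simpa using (tendsto_const_div_atTop_nhds_zero_nat C).const_sub ((b : ℝ) / a)
  filter_upwards [hlim.eventually (lt_mem_nhds hy), eventually_gt_atTop 0] with n hyn hn
  refine hyn.trans_le ?_
  have ha' : (0 : ℝ) < a := by exact_mod_cast ha
  have hn' : (0 : ℝ) < n := by exact_mod_cast hn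
  have hbound : (b * n : ℝ) ≤ a * emb n G + a * C := by
    simpa [C, mul_assoc] using (Nat.cast_le (α := ℝ)).2 (mul_le_mul_emb_add ha hb φ n)
  rw [div_sub_div _ _ ha'.ne' hn'.ne', div_le_div_iff₀ (by positivity) hn']
  nlinarith

lemma one_le_of_mem_kneserRatios [Nonempty V] {x : ℝ} (hx : x ∈ kneserRatios G) : 1 ≤ x := by
  obtain ⟨a, b, -, hb, ⟨h, -⟩, rfl⟩ := hx
  obtain ⟨v⟩ := ‹Nonempty V›
  have hba : b ≤ a := by simpa [(h v).2] using card_le_univ (h v).1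
  rw [one_le_div (by exact_mod_cast hb)]
  exact_mod_cast hba

/-- Colouring by singletons: `χ_f(G) ≤ |V|`. -/
lemma kneserRatios_nonempty [Fintype V] [Nonempty V] : (kneserRatios G).Nonempty := by
  let e := Fintype.equivFin V
  refine ⟨_, Fintype.card V, 1, Fintype.card_pos, one_pos,
    ⟨fun v => ⟨{e v}, card_singleton _⟩, fun u v huv => ?_⟩, rfl⟩
  have hne : e u ≠ e v := e.injective.ne huv.ne
  exact ⟨fun h => hne (singleton_injective (congrArg Subtype.val h)), disjoint_singleton.2 hne⟩

lemma one_le_sInf_kneserRatios [Fintype V] [Nonempty V] : 1 ≤ sInf (kneserRatios G) :=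
  le_csInf kneserRatios_nonempty fun _ => one_le_of_mem_kneserRatios

lemma emb_div_le [Fintype V] [Nonempty V] (n : ℕ) :
    (emb n G : ℝ) / n ≤ 1 / sInf (kneserRatios G) := by
  have hL : (0 : ℝ) < sInf (kneserRatios G) := one_pos.trans_le one_le_sInf_kneserRatios
  rcases Nat.eq_zero_or_pos (emb n G) with hm | hm
  · rw [hm, Nat.cast_zero, zero_div]
    positivity
  have hcopy := hasCopy_kneserGraph_emb hm
  have hn : 0 < n := hm.trans_le (le_of_hasCopy_kneserGraph hcopy)
  obtain ⟨f, -, hf⟩ := hcopy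
  have hmem : (n : ℝ) / emb n G ∈ kneserRatios G := ⟨n, emb n G, hn, hm, ⟨f, hf⟩, rfl⟩
  have hle := csInf_le ⟨1, fun _ => one_le_of_mem_kneserRatios⟩ hmem
  rw [div_le_div_iff₀ (by exact_mod_cast hn) hL, one_mul]
  rwa [le_div_iff₀ (by exact_mod_cast hm), mul_comm] at hle

theorem tendsto_emb_div [Fintype V] [Nonempty V] :
    Tendsto (fun n : ℕ => (emb n G : ℝ) / n) atTop (𝓝 (1 / sInf (kneserRatios G))) := by
  have hL : (0 : ℝ) < sInf (kneserRatios G) := one_pos.trans_le one_le_sInf_kneserRatios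
  refine tendsto_order.2 ⟨fun y hy => ?_, fun y hy => Eventually.of_forall fun n =>
    (emb_div_le n).trans_lt hy⟩
  -- `y` may be nonpositive; interpose a positive `y'` so that `1 / y'` bounds `χ_f(G)` from above
  obtain ⟨y', hyy', hy'⟩ := exists_between (max_lt hy (by positivity : (0 : ℝ) < 1 / sInf _))
  have hy'0 : 0 < y' := (le_max_right _ _).trans_lt hyy'
  obtain ⟨_, ⟨a, b, ha, hb, ⟨h, hh⟩, rfl⟩, hlt⟩ :=
    exists_lt_of_csInf_lt kneserRatios_nonempty ((lt_one_div hy'0 hL).1 hy')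
  refine eventually_lt_emb_div ha hb ⟨h, hh _ _⟩ (((le_max_left _ _).trans_lt hyy').trans ?_)
  simpa only [one_div_div] using (lt_one_div (by positivity) hy'0).1 hlt

end

/-- for a finite simple graph `G` with at least one edge,
`lim_{n→∞} emb(n,G)/n = 1/χ_f(G)`, where
`χ_f(G) = inf { a/b : a, b ≥ 1 and there is a graph homomorphism G → Kn(a,b) }`. -/
theorem stmt19 {V : Type*} [Fintype V] (G : SimpleGraph V)
    (hedge : ∃ a b, G.Adj a b) :
    Filter.Tendsto (fun n : ℕ => (emb n G : ℝ) / (n : ℝ)) Filter.atTop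
      (nhds (1 / sInf {x : ℝ | ∃ a b : ℕ, 0 < a ∧ 0 < b ∧
        (∃ h : V → {A : Finset (Fin a) // A.card = b},
          ∀ u v, G.Adj u v → (kneserGraph a b).Adj (h u) (h v)) ∧
        x = (a : ℝ) / (b : ℝ)})) :=
  have : Nonempty V := ⟨hedge.choose⟩
  tendsto_emb_div
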